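/- arXiv:1505.07612 — 3 statements merged into one kernel-verified Lean document; each statement's English description precedes it below -/
import Mathlib

section
/- Suppose h : [A,1) → ℝ is continuously differentiable, h(A) = 0, and for all x ∈ (A,1), λ h(x)(1−x) + (1/2) h'(x) ρ² x²(1−x)² + b − (aρ²/(2λ)) x² = 0, where A = √(2λb/(aρ²)) < 1. Then h(x) > 0 for all x ∈ (A,1). -/
/-!
If `h` were `≤ 0` somewhere in `(A, 1)`, say at `x`, its minimum over `[A, x]` would be `≤ 0` and
attained at some `c > A` (at `x` itself if the minimum is `h A = 0`). The left difference quotients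
at `c` are `≤ 0`, so `h' c ≤ 0`. But `c > A` means `b < (aρ²/(2λ)) c²`, and together with
`h c ≤ 0` the ODE forces `h' c > 0`.
-/

open Set Filter Topology

theorem IsMinOn.hasDerivAt_nonpos_of_Icc {f : ℝ → ℝ} {f' a b c : ℝ} (hmin : IsMinOn f (Icc a b) c)
    (hac : a < c) (hcb : c ≤ b) (hf : HasDerivAt f f' c) : f' ≤ 0 := by
  have hslope : Tendsto (slope f c) (𝓝[<] c) (𝓝 f') :=
    (hasDerivAt_iff_tendsto_slope_left_right.mp hf).1
  refine le_of_tendsto hslope ?_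
  filter_upwards [Ioo_mem_nhdsLT hac] with y hy
  rw [slope_def_field]
  exact div_nonpos_of_nonneg_of_nonpos (sub_nonneg.mpr (hmin ⟨hy.1.le, hy.2.le.trans hcb⟩))
    (sub_nonpos.mpr hy.2.le)

theorem pos_of_deriv_pos_where_nonpos {f f' : ℝ → ℝ} {a b : ℝ} (hab : a < b)
    (hf : ContinuousOn f (Icc a b)) (ha : 0 ≤ f a)
    (hderiv : ∀ x ∈ Ioc a b, HasDerivAt f (f' x) x)
    (hpos : ∀ x ∈ Ioc a b, f x ≤ 0 → 0 < f' x) : 0 < f b := by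
  by_contra! hb
  obtain ⟨c, hc, hmin⟩ := isCompact_Icc.exists_isMinOn (nonempty_Icc.mpr hab.le) hf
  have hcb : f c ≤ f b := hmin (right_mem_Icc.mpr hab.le)
  obtain ⟨d, hd, hdmin, hd0⟩ : ∃ d ∈ Ioc a b, IsMinOn f (Icc a b) d ∧ f d ≤ 0 := by
    rcases hc.1.eq_or_lt with rfl | hac
    · exact ⟨b, ⟨hab, le_rfl⟩, fun y hy => (hb.trans ha).trans (hmin hy), hb⟩
    · exact ⟨c, ⟨hac, hc.2⟩, hmin, hcb.trans hb⟩
  exact (hpos d hd hd0).not_ge (hdmin.hasDerivAt_nonpos_of_Icc hd.1 hd.2 (hderiv d hd))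

theorem lt_mul_sq_of_sqrt_lt {a b lam ρ x : ℝ} (ha : 0 < a) (hlam : 0 < lam) (hρ : ρ ≠ 0)
    (hx : Real.sqrt (2 * lam * b / (a * ρ ^ 2)) < x) : b < a * ρ ^ 2 / (2 * lam) * x ^ 2 := by
  have hx0 : 0 < x := (Real.sqrt_nonneg _).trans_lt hx
  have hsq := (Real.sqrt_lt' hx0).mp hx
  rw [div_lt_iff₀ (by positivity)] at hsq
  rw [div_mul_eq_mul_div, lt_div_iff₀ (by positivity)]
  linarith

theorem deriv_pos_of_ode_of_nonpos {lam ρ b k x y y' : ℝ} (hlam : 0 ≤ lam) (hρ : ρ ≠ 0)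
    (hx0 : x ≠ 0) (hx1 : x < 1) (hy : y ≤ 0) (hbk : b < k * x ^ 2)
    (hode : lam * y * (1 - x) + (1 / 2) * y' * ρ ^ 2 * x ^ 2 * (1 - x) ^ 2 + b - k * x ^ 2 = 0) :
    0 < y' := by
  have hcoef : 0 < (1 / 2) * ρ ^ 2 * x ^ 2 * (1 - x) ^ 2 := by
    have : 1 - x ≠ 0 := by linarith
    positivity
  have hdamp : lam * y * (1 - x) ≤ 0 :=
    mul_nonpos_of_nonpos_of_nonneg (mul_nonpos_of_nonneg_of_nonpos hlam hy) (by linarith)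
  nlinarith

theorem h_positive_general (a b lam ρ A : ℝ) (ha : 0 < a) (hlam : 0 < lam) (hρ : 0 < ρ)
    (hAdef : A = Real.sqrt (2 * lam * b / (a * ρ ^ 2)))
    (h h' : ℝ → ℝ)
    (hderiv : ∀ x ∈ Set.Ioo A 1, HasDerivAt h (h' x) x)
    (hcont : ContinuousOn h (Set.Ico A 1))
    (hode : ∀ x ∈ Set.Ioo A 1,
      lam * h x * (1 - x) + (1 / 2) * h' x * ρ ^ 2 * x ^ 2 * (1 - x) ^ 2 +
        b - a * ρ ^ 2 / (2 * lam) * x ^ 2 = 0)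
    (hA0 : h A = 0) :
    ∀ x ∈ Set.Ioo A 1, 0 < h x := by
  intro x hx
  have hsub : Ioc A x ⊆ Ioo A 1 := fun y hy => ⟨hy.1, hy.2.trans_lt hx.2⟩
  refine pos_of_deriv_pos_where_nonpos hx.1
    (hcont.mono fun y hy => ⟨hy.1, hy.2.trans_lt hx.2⟩) hA0.ge
    (fun y hy => hderiv y (hsub hy)) fun y hy hy0 => ?_
  have hAy : Real.sqrt (2 * lam * b / (a * ρ ^ 2)) < y := hAdef ▸ hy.1
  exact deriv_pos_of_ode_of_nonpos hlam.le hρ.ne' ((Real.sqrt_nonneg _).trans_lt hAy).ne'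
    (hsub hy).2 hy0 (lt_mul_sq_of_sqrt_lt ha hlam hρ.ne' hAy) (hode y (hsub hy))

/-- A `C¹` solution `h` of
`λ h(x)(1−x) + (1/2) h'(x) ρ² x²(1−x)² + b − (aρ²/(2λ)) x² = 0` on `(A,1)`
with `h(A) = 0`, where `A = √(2λb/(aρ²)) < 1`, is strictly positive on `(A,1)`. -/
theorem h_positive (a b lam ρ A : ℝ) (ha : 0 < a) (hb : 0 < b) (hlam : 0 < lam) (hρ : 0 < ρ)
    (hAdef : A = Real.sqrt (2 * lam * b / (a * ρ ^ 2))) (hA1 : A < 1)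
    (h h' : ℝ → ℝ)
    (hderiv : ∀ x ∈ Set.Ioo A 1, HasDerivAt h (h' x) x)
    (hcont : ContinuousOn h (Set.Ico A 1)) (hcont' : ContinuousOn h' (Set.Ioo A 1))
    (hode : ∀ x ∈ Set.Ioo A 1,
      lam * h x * (1 - x) + (1 / 2) * h' x * ρ ^ 2 * x ^ 2 * (1 - x) ^ 2 +
        b - a * ρ ^ 2 / (2 * lam) * x ^ 2 = 0)
    (hA0 : h A = 0) :
    ∀ x ∈ Set.Ioo A 1, 0 < h x :=
  h_positive_general a b lam ρ A ha hlam hρ hAdef h h' hderiv hcont hode hA0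
end

section
/- Define f₂(x) = K₁ f(x) + f(x) ∫_A^x (−2/ρ²)·(ay+b)/(y²(1−y)²)·(1/f(y)) dy, where f(x) = ((1−x)/x)^α e^{α/x}, α = 2λ/ρ². Then f₂ solves the ODE λ f₂(x)(1−x) + a x + (1/2) f₂'(x) ρ² x²(1−x)² + b = 0 on (A,1). -/
/-!
On `(0,1)` the function `f` is positive and solves the homogeneous linear equation
`f' = p f` with `p x = -α / (x² (1 - x))`: write it as `exp (α (log (1 - x) - log x) + α / x)`.
Variation of constants then gives `f₂' = p f₂ + q` with `q x = -(2/ρ²) (a x + b) / (x² (1 - x)²)`,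
and multiplying by `ρ² x² (1 - x)² / 2` turns this into the stated equation, because
`α ρ² / 2 = λ`.
-/

open Set Filter Topology

noncomputable def homogeneousSolution (α x : ℝ) : ℝ := ((1 - x) / x) ^ α * Real.exp (α / x)

lemma homogeneousSolution_eq_exp {α x : ℝ} (hx : x ∈ Ioo (0 : ℝ) 1) :
    homogeneousSolution α x = Real.exp (α * (Real.log (1 - x) - Real.log x) + α / x) := by
  rw [homogeneousSolution, Real.rpow_def_of_pos (div_pos (sub_pos.2 hx.2) hx.1),
    Real.log_div (sub_pos.2 hx.2).ne' hx.1.ne', ← Real.exp_add, mul_comm]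

lemma hasDerivAt_homogeneousSolution (α : ℝ) {x : ℝ} (hx : x ∈ Ioo (0 : ℝ) 1) :
    HasDerivAt (homogeneousSolution α) (-α / (x ^ 2 * (1 - x)) * homogeneousSolution α x) x := by
  obtain ⟨hx0, hx1⟩ := hx
  have hexp : HasDerivAt (fun z => Real.exp (α * (Real.log (1 - z) - Real.log z) + α / z))
      (Real.exp (α * (Real.log (1 - x) - Real.log x) + α / x) *
        (α * (-1 / (1 - x) - 1 / x) + α * -(x ^ 2)⁻¹)) x := by
    have hlog1 := ((hasDerivAt_id x).const_sub 1).log (sub_pos.2 hx1).ne'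
    have hlog2 := (hasDerivAt_id x).log hx0.ne'
    have hinv := (hasDerivAt_inv hx0.ne').const_mul α
    simp only [id, div_eq_mul_inv] at hlog1 hlog2 hinv ⊢
    convert ((hlog1.sub hlog2).const_mul α |>.add hinv).exp using 2 <;> simp
  have hnhds : homogeneousSolution α =ᶠ[𝓝 x]
      fun z => Real.exp (α * (Real.log (1 - z) - Real.log z) + α / z) :=
    eventually_of_mem (isOpen_Ioo.mem_nhds ⟨hx0, hx1⟩) fun z hz => homogeneousSolution_eq_exp hz
  refine (hexp.congr_of_eventuallyEq hnhds).congr_deriv ?_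
  rw [homogeneousSolution_eq_exp ⟨hx0, hx1⟩, mul_comm]
  have h1x : (1 : ℝ) - x ≠ 0 := (sub_pos.2 hx1).ne'
  field_simp [h1x]
  ring

lemma homogeneousSolution_pos (α : ℝ) {x : ℝ} (hx : x ∈ Ioo (0 : ℝ) 1) :
    0 < homogeneousSolution α x := by
  rw [homogeneousSolution_eq_exp hx]
  exact Real.exp_pos _

theorem hasDerivAt_variation_of_constants {f p q : ℝ → ℝ} {U : Set ℝ} (hU : IsOpen U)
    {A x : ℝ} (K : ℝ) (hf : ∀ y ∈ U, HasDerivAt f (p y * f y) y) (hf0 : ∀ y ∈ U, f y ≠ 0)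
    (hq : ContinuousOn q U) (hAx : uIcc A x ⊆ U) :
    HasDerivAt (fun t => K * f t + f t * ∫ y in A..t, q y / f y)
      (p x * (K * f x + f x * ∫ y in A..x, q y / f y) + q x) x := by
  have hx : x ∈ U := hAx right_mem_uIcc
  have hqf : ContinuousOn (fun y => q y / f y) U :=
    hq.div (fun y hy => (hf y hy).continuousAt.continuousWithinAt) hf0
  have hFTC : HasDerivAt (fun t => ∫ y in A..t, q y / f y) (q x / f x) x :=
    intervalIntegral.integral_hasDerivAt_right ((hqf.mono hAx).intervalIntegrable)
      (hqf.stronglyMeasurableAtFilter hU x hx) (hqf.continuousAt (hU.mem_nhds hx))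
  refine (((hf x hx).const_mul K).add ((hf x hx).mul hFTC)).congr_deriv ?_
  field_simp [hf0 x hx]
  ring

theorem f2_solves_ode_general (a b lam ρ A K₁ : ℝ)
    (hρ : 0 < ρ) (hA : A ∈ Set.Ioo (0:ℝ) 1)
    (α : ℝ) (hα : α = 2 * lam / ρ ^ 2)
    (f f₂ : ℝ → ℝ)
    (hf : ∀ x ∈ Set.Ioo (0:ℝ) 1, f x = ((1 - x) / x) ^ α * Real.exp (α / x))
    (hf₂ : ∀ x ∈ Set.Ioo (0:ℝ) 1, f₂ x = K₁ * f x +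
      f x * ∫ y in A..x, (-2 / ρ ^ 2) * (a * y + b) / (y ^ 2 * (1 - y) ^ 2) * (1 / f y)) :
    ∀ x ∈ Set.Ioo A 1,
      lam * f₂ x * (1 - x) + a * x + (1 / 2) * deriv f₂ x * ρ ^ 2 * x ^ 2 * (1 - x) ^ 2 + b
        = 0 := by
  rintro x ⟨hAx, hx1⟩
  have hx : x ∈ Ioo (0 : ℝ) 1 := ⟨hA.1.trans hAx, hx1⟩
  have hsub : uIcc A x ⊆ Ioo 0 1 := by
    rw [uIcc_of_le hAx.le]
    exact Icc_subset_Ioo hA.1 hx1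
  have hf_eq : EqOn f (homogeneousSolution α) (Ioo 0 1) := hf
  have hf' : ∀ y ∈ Ioo (0 : ℝ) 1, HasDerivAt f (-α / (y ^ 2 * (1 - y)) * f y) y := fun y hy => by
    rw [hf_eq hy]
    exact (hasDerivAt_homogeneousSolution α hy).congr_of_eventuallyEq
      (eventually_of_mem (isOpen_Ioo.mem_nhds hy) hf_eq)
  have hq : ContinuousOn (fun y => -2 / ρ ^ 2 * (a * y + b) / (y ^ 2 * (1 - y) ^ 2)) (Ioo 0 1) :=
    ContinuousOn.div (by fun_prop) (by fun_prop) fun y hy =>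
      (mul_pos (pow_pos hy.1 2) (pow_pos (sub_pos.2 hy.2) 2)).ne'
  have hf0 : ∀ y ∈ Ioo (0 : ℝ) 1, f y ≠ 0 := fun y hy => by
    rw [hf_eq hy]
    exact (homogeneousSolution_pos α hy).ne'
  simp only [mul_one_div] at hf₂
  have hderiv := hasDerivAt_variation_of_constants isOpen_Ioo K₁ hf' hf0 hq hsub
  rw [(hderiv.congr_of_eventuallyEq (eventually_of_mem (isOpen_Ioo.mem_nhds hx) hf₂)).deriv,
    ← hf₂ x hx]
  have h1x : (1 : ℝ) - x ≠ 0 := (sub_pos.2 hx1).ne'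
  subst hα
  field_simp [h1x, hx.1.ne', hρ.ne']
  ring

/-- The variation-of-constants formula solves the inhomogeneous ODE on `(A,1)`. -/
theorem f2_solves_ode (a b lam ρ A K₁ : ℝ) (ha : 0 < a) (hb : 0 < b)
    (hlam : 0 < lam) (hρ : 0 < ρ) (hA : A ∈ Set.Ioo (0:ℝ) 1)
    (α : ℝ) (hα : α = 2 * lam / ρ ^ 2)
    (f f₂ : ℝ → ℝ)
    (hf : ∀ x ∈ Set.Ioo (0:ℝ) 1, f x = ((1 - x) / x) ^ α * Real.exp (α / x))
    (hf₂ : ∀ x ∈ Set.Ioo (0:ℝ) 1, f₂ x = K₁ * f x +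
      f x * ∫ y in A..x, (-2 / ρ ^ 2) * (a * y + b) / (y ^ 2 * (1 - y) ^ 2) * (1 / f y)) :
    ∀ x ∈ Set.Ioo A 1,
      lam * f₂ x * (1 - x) + a * x + (1 / 2) * deriv f₂ x * ρ ^ 2 * x ^ 2 * (1 - x) ^ 2 + b
        = 0 :=
  f2_solves_ode_general a b lam ρ A K₁ hρ hA α hα f f₂ hf hf₂
end

section
/- Define f₂(x) via the variation-of-constants formula with K₁ as specified and f(x) = ((1−x)/x)^α e^{α/x}, α = 2λ/ρ². Then f₂(x) ~ −C/(1−x) as x → 1⁻ for some constant C > 0; in particular f₂(x) → −∞ as x → 1⁻. -/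
open Filter Set intervalIntegral MeasureTheory

private lemma hasDeriv_aux {p : ℝ} (hp : 0 < p) {y : ℝ} (hy : y < 1) :
    HasDerivAt (fun t : ℝ => (1 - t) ^ (-p) / p) ((1 - y) ^ (-(p + 1))) y := by
  have h1y : (0:ℝ) < 1 - y := by linarith
  have h1 : HasDerivAt (fun t : ℝ => t ^ (-p)) (-p * (1 - y) ^ (-p - 1)) (1 - y) :=
    Real.hasDerivAt_rpow_const (Or.inl h1y.ne')
  have h2 : HasDerivAt (fun t : ℝ => 1 - t) (-1) y := by
    simpa using (hasDerivAt_id y).const_sub 1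
  have h3 := (h1.comp y h2).div_const p
  have heq : -p * (1 - y) ^ (-p - 1) * -1 / p = (1 - y) ^ (-(p + 1)) := by
    rw [show -(p+1) = -p - 1 by ring]
    field_simp
  rwa [heq] at h3

private lemma cont_pow_aux {p : ℝ} {u v : ℝ} (hu : u < 1) (hv : v < 1) :
    ContinuousOn (fun y : ℝ => (1 - y) ^ (-(p + 1))) (Set.uIcc u v) := by
  apply ContinuousOn.rpow_const ((continuous_const.sub continuous_id).continuousOn)
  intro y hy
  have hy1 : y < 1 := lt_of_le_of_lt hy.2 (max_lt hu hv)
  exact Or.inl (sub_ne_zero.mpr (by simpa using hy1.ne'))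

private lemma integ_pow {p : ℝ} (hp : 0 < p) {u v : ℝ} (hu : u < 1) (hv : v < 1) :
    ∫ y in u..v, (1 - y) ^ (-(p + 1)) = ((1 - v) ^ (-p) - (1 - u) ^ (-p)) / p := by
  rw [integral_eq_sub_of_hasDerivAt
      (fun y hy => hasDeriv_aux hp (lt_of_le_of_lt hy.2 (max_lt hu hv)))
      ((cont_pow_aux hu hv).intervalIntegrable)]
  ring

private lemma intable_aux {p : ℝ} {A₀ : ℝ} {φ : ℝ → ℝ} (hφ : ContinuousOn φ (Set.Icc A₀ 1))
    {u v : ℝ} (hAu : A₀ ≤ u) (hAv : A₀ ≤ v) (hu : u < 1) (hv : v < 1) :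
    IntervalIntegrable (fun y => φ y * (1 - y) ^ (-(p + 1))) volume u v := by
  apply ContinuousOn.intervalIntegrable
  apply ContinuousOn.mul _ (cont_pow_aux hu hv)
  apply hφ.mono
  intro y hy
  exact ⟨le_trans (le_min hAu hAv) hy.1, le_trans hy.2 (le_of_lt (max_lt hu hv))⟩

private lemma tendsto_rpow_zero {p : ℝ} (hp : 0 < p) :
    Tendsto (fun x : ℝ => (1 - x) ^ p) (nhdsWithin 1 (Set.Iio 1)) (nhds 0) := by
  have h1 : Tendsto (fun x : ℝ => 1 - x) (nhdsWithin 1 (Set.Iio 1)) (nhds 0) := by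
    have hc : Continuous (fun x : ℝ => 1 - x) := continuous_const.sub continuous_id
    have := (hc.tendsto (1:ℝ)).mono_left (nhdsWithin_le_nhds (s := Set.Iio 1))
    simpa using this
  have h2 : ContinuousAt (fun t : ℝ => t ^ p) 0 :=
    Real.continuousAt_rpow_const 0 p (Or.inr hp.le)
  have := h2.tendsto.comp h1
  simpa [Function.comp_def, Real.zero_rpow hp.ne'] using this

private lemma key_lemma {p A₀ : ℝ} (hp : 0 < p) (hA : A₀ ∈ Set.Ioo (0:ℝ) 1) (φ : ℝ → ℝ)
    (hφ : ContinuousOn φ (Set.Icc A₀ 1)) :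
    Tendsto (fun x => (1 - x) ^ p * ∫ y in A₀..x, φ y * (1 - y) ^ (-(p + 1)))
      (nhdsWithin 1 (Set.Iio 1)) (nhds (φ 1 / p)) := by
  -- first: the case φ 1 = 0 as an auxiliary claim applied to ψ = φ - φ 1
  set ψ : ℝ → ℝ := fun y => φ y - φ 1 with hψdef
  have hψc : ContinuousOn ψ (Set.Icc A₀ 1) := hφ.sub continuousOn_const
  have hψ1 : ψ 1 = 0 := by simp [hψdef]
  have hzero : Tendsto (fun x => (1 - x) ^ p * ∫ y in A₀..x, ψ y * (1 - y) ^ (-(p + 1)))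
      (nhdsWithin 1 (Set.Iio 1)) (nhds 0) := by
    rw [Metric.tendsto_nhds]
    intro ε hε
    -- continuity of ψ at 1 within Icc A₀ 1
    have hcw : ContinuousWithinAt ψ (Set.Icc A₀ 1) 1 := hψc 1 ⟨hA.2.le, le_refl 1⟩
    rw [Metric.continuousWithinAt_iff] at hcw
    have hε4 : 0 < p * ε / 4 := by positivity
    obtain ⟨δ, hδ, hδ'⟩ := hcw _ hε4
    set x₀ : ℝ := max A₀ (1 - δ / 2) with hx₀def
    have hx₀A : A₀ ≤ x₀ := le_max_left _ _
    have hx₀1 : x₀ < 1 := by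
      rw [hx₀def]; apply max_lt hA.2; linarith
    have hψsmall : ∀ y ∈ Set.Icc x₀ 1, |ψ y| ≤ p * ε / 4 := by
      intro y hy
      have hy1 : dist y 1 < δ := by
        rw [Real.dist_eq, abs_of_nonpos (by linarith [hy.2])]
        have : 1 - δ / 2 ≤ x₀ := le_max_right _ _
        have := hy.1
        linarith
      have := hδ' ⟨le_trans hx₀A hy.1, hy.2⟩ hy1
      rw [hψ1, dist_zero_right, Real.norm_eq_abs] at this
      exact this.le
    set M : ℝ := |∫ y in A₀..x₀, ψ y * (1 - y) ^ (-(p + 1))| with hMdef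
    have hM0 : 0 ≤ M := abs_nonneg _
    have hev1 : ∀ᶠ x in nhdsWithin (1:ℝ) (Set.Iio 1), x ∈ Set.Ioo x₀ 1 :=
      Ioo_mem_nhdsLT_of_mem ⟨hx₀1, le_refl 1⟩
    have hev2 : ∀ᶠ x in nhdsWithin (1:ℝ) (Set.Iio 1), (1 - x) ^ p < ε / (2 * (M + 1)) :=
      (tendsto_rpow_zero hp).eventually_lt_const (by positivity)
    filter_upwards [hev1, hev2] with x hx hx2
    have hx1 : x < 1 := hx.2
    have hxx₀ : x₀ ≤ x := hx.1.le
    have hAx : A₀ ≤ x := le_trans hx₀A hxx₀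
    have h1x : (0:ℝ) < 1 - x := by linarith
    -- split the integral
    have hsplit : ∫ y in A₀..x, ψ y * (1 - y) ^ (-(p + 1))
        = (∫ y in A₀..x₀, ψ y * (1 - y) ^ (-(p + 1)))
          + ∫ y in x₀..x, ψ y * (1 - y) ^ (-(p + 1)) :=
      (integral_add_adjacent_intervals (intable_aux hψc (le_refl _) hx₀A hA.2 hx₀1)
        (intable_aux hψc hx₀A hAx hx₀1 hx1)).symm
    -- bound the tail integral
    have htail : |∫ y in x₀..x, ψ y * (1 - y) ^ (-(p + 1))| ≤ p * ε / 4 * ((1 - x) ^ (-p) / p) := by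
      calc |∫ y in x₀..x, ψ y * (1 - y) ^ (-(p + 1))|
          ≤ ∫ y in x₀..x, |ψ y * (1 - y) ^ (-(p + 1))| :=
            intervalIntegral.abs_integral_le_integral_abs hxx₀
        _ ≤ ∫ y in x₀..x, p * ε / 4 * (1 - y) ^ (-(p + 1)) := by
            apply intervalIntegral.integral_mono_on hxx₀
              ((intable_aux hψc hx₀A hAx hx₀1 hx1).abs)
              (((cont_pow_aux hx₀1 hx1).const_smul (p * ε / 4)).intervalIntegrable)
            intro y hy
            have hy1 : y < 1 := lt_of_le_of_lt hy.2 hx1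
            have h1y : (0:ℝ) < 1 - y := by linarith
            rw [abs_mul, abs_of_pos (Real.rpow_pos_of_pos h1y _)]
            exact mul_le_mul_of_nonneg_right
              (hψsmall y ⟨hy.1, hy1.le⟩) (Real.rpow_pos_of_pos h1y _).le
        _ = p * ε / 4 * (((1 - x) ^ (-p) - (1 - x₀) ^ (-p)) / p) := by
            rw [intervalIntegral.integral_const_mul, integ_pow hp hx₀1 hx1]
        _ ≤ p * ε / 4 * ((1 - x) ^ (-p) / p) := by
            have h0 : (0:ℝ) ≤ (1 - x₀) ^ (-p) := Real.rpow_nonneg (by linarith) _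
            gcongr
            linarith
    -- combine
    rw [Real.dist_eq, sub_zero, hsplit, abs_mul,
      abs_of_pos (Real.rpow_pos_of_pos h1x p)]
    have hpow1 : (1 - x) ^ p * (1 - x) ^ (-p) = 1 := by
      rw [← Real.rpow_add h1x]; simp
    have hb1 : (1 - x) ^ p * |(∫ y in A₀..x₀, ψ y * (1 - y) ^ (-(p + 1)))
        + ∫ y in x₀..x, ψ y * (1 - y) ^ (-(p + 1))|
        ≤ (1 - x) ^ p * (M + p * ε / 4 * ((1 - x) ^ (-p) / p)) := by
      apply mul_le_mul_of_nonneg_left _ (Real.rpow_pos_of_pos h1x p).le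
      exact le_trans (abs_add_le _ _) (add_le_add (le_refl M) htail)
    have hb2 : (1 - x) ^ p * (M + p * ε / 4 * ((1 - x) ^ (-p) / p))
        = (1 - x) ^ p * M + ε / 4 := by
      have step : (1 - x) ^ p * (M + p * ε / 4 * ((1 - x) ^ (-p) / p))
          = (1 - x) ^ p * M + ((1 - x) ^ p * (1 - x) ^ (-p)) * (p * ε / 4 / p) := by ring
      rw [step, hpow1, one_mul]
      congr 1
      field_simp
    have hb3 : (1 - x) ^ p * M < ε / 2 := by
      calc (1 - x) ^ p * M ≤ (1 - x) ^ p * (M + 1) :=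
            mul_le_mul_of_nonneg_left (by linarith) (Real.rpow_pos_of_pos h1x p).le
        _ < ε / (2 * (M + 1)) * (M + 1) := by
            apply mul_lt_mul_of_pos_right hx2 (by linarith)
        _ = ε / 2 := by field_simp
    calc (1 - x) ^ p * |_| ≤ (1 - x) ^ p * M + ε / 4 := by rw [← hb2]; exact hb1
      _ < ε / 2 + ε / 4 := by linarith
      _ < ε := by linarith
  -- now add back the constant part
  have hx₀ev : ∀ᶠ x in nhdsWithin (1:ℝ) (Set.Iio 1), x ∈ Set.Ioo A₀ 1 :=
    Ioo_mem_nhdsLT_of_mem ⟨hA.2, le_refl 1⟩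
  have heq : (fun x => (1 - x) ^ p * ∫ y in A₀..x, φ y * (1 - y) ^ (-(p + 1)))
      =ᶠ[nhdsWithin (1:ℝ) (Set.Iio 1)]
      (fun x => (1 - x) ^ p * (∫ y in A₀..x, ψ y * (1 - y) ^ (-(p + 1)))
        + φ 1 * ((1 - (1 - x) ^ p * (1 - A₀) ^ (-p)) / p)) := by
    filter_upwards [hx₀ev] with x hx
    have hx1 : x < 1 := hx.2
    have hAx : A₀ ≤ x := hx.1.le
    have h1x : (0:ℝ) < 1 - x := by linarith
    have hint1 := intable_aux (p := p) hψc (le_refl A₀) hAx hA.2 hx1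
    have hint2 : IntervalIntegrable (fun y => φ 1 * (1 - y) ^ (-(p + 1))) volume A₀ x :=
      (continuousOn_const.mul (cont_pow_aux hA.2 hx1)).intervalIntegrable
    have hsum : ∫ y in A₀..x, φ y * (1 - y) ^ (-(p + 1))
        = (∫ y in A₀..x, ψ y * (1 - y) ^ (-(p + 1)))
          + ∫ y in A₀..x, φ 1 * (1 - y) ^ (-(p + 1)) := by
      rw [← intervalIntegral.integral_add hint1 hint2]
      apply intervalIntegral.integral_congr
      intro y hy
      simp only [hψdef]
      ring
    have hpow1 : (1 - x) ^ p * (1 - x) ^ (-p) = 1 := by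
      rw [← Real.rpow_add h1x]; simp
    rw [hsum, intervalIntegral.integral_const_mul, integ_pow hp hA.2 hx1]
    have hpne : p ≠ 0 := hp.ne'
    field_simp
    linear_combination (φ 1) * hpow1
  have h2 : Tendsto (fun x => φ 1 * ((1 - (1 - x) ^ p * (1 - A₀) ^ (-p)) / p))
      (nhdsWithin (1:ℝ) (Set.Iio 1)) (nhds (φ 1 * ((1 - 0 * (1 - A₀) ^ (-p)) / p))) :=
    tendsto_const_nhds.mul
      ((tendsto_const_nhds.sub ((tendsto_rpow_zero hp).mul tendsto_const_nhds)).div_const p)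
  have hsumT := hzero.add h2
  apply Filter.Tendsto.congr' heq.symm
  convert hsumT using 2
  rw [zero_mul, sub_zero, mul_one_div, zero_add]

/-- With `f₂` defined by the variation-of-constants formula, `f₂(x) → −∞` as
`x → 1⁻`; more precisely `f₂(x) ~ −C/(1−x)` for some constant `C > 0`. -/
theorem f2_tendsto_atBot (a b lam ρ A K₁ : ℝ) (ha : 0 < a) (hb : 0 < b)
    (hlam : 0 < lam) (hρ : 0 < ρ) (hA : A ∈ Set.Ioo (0:ℝ) 1)
    (α : ℝ) (hα : α = 2 * lam / ρ ^ 2)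
    (f f₂ : ℝ → ℝ)
    (hf : ∀ x ∈ Set.Ioo (0:ℝ) 1, f x = ((1 - x) / x) ^ α * Real.exp (α / x))
    (hf₂ : ∀ x ∈ Set.Ioo (0:ℝ) 1, f₂ x = K₁ * f x +
      f x * ∫ y in A..x, (-2 / ρ ^ 2) * (a * y + b) / (y ^ 2 * (1 - y) ^ 2) * (1 / f y)) :
    Filter.Tendsto f₂ (nhdsWithin 1 (Set.Iio 1)) Filter.atBot ∧
      ∃ C > (0:ℝ), Filter.Tendsto (fun x => (1 - x) * f₂ x)
        (nhdsWithin 1 (Set.Iio 1)) (nhds (-C)) := by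
  obtain ⟨hA0, hA1⟩ := hA
  have hρ2 : (0:ℝ) < ρ ^ 2 := by positivity
  have hα0 : 0 < α := by rw [hα]; positivity
  set p : ℝ := α + 1 with hpdef
  have hp : 0 < p := by positivity
  set φ : ℝ → ℝ := fun y => -2 / ρ ^ 2 * (a * y + b) * (y ^ α * Real.exp (-(α / y)) / y ^ 2)
    with hφdef
  have hφc : ContinuousOn φ (Set.Icc A 1) := by
    have hpos : ∀ y ∈ Set.Icc A 1, (0:ℝ) < y := fun y hy => lt_of_lt_of_le hA0 hy.1
    apply ContinuousOn.mul
    · exact (continuous_const.mul (by continuity)).continuousOn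
    · apply ContinuousOn.div
      · apply ContinuousOn.mul
        · exact ContinuousOn.rpow_const continuousOn_id (fun y hy => Or.inl (hpos y hy).ne')
        · exact Real.continuous_exp.comp_continuousOn
            ((continuousOn_const.div continuousOn_id (fun y hy => (hpos y hy).ne')).neg)
      · exact (continuous_pow 2).continuousOn
      · exact fun y hy => pow_ne_zero 2 (hpos y hy).ne'
  have hkey := key_lemma hp ⟨hA0, hA1⟩ φ hφc
  have hevAx : ∀ᶠ x in nhdsWithin (1:ℝ) (Set.Iio 1), x ∈ Set.Ioo A 1 :=
    Ioo_mem_nhdsLT_of_mem ⟨hA1, le_refl 1⟩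
  have hT3 : Tendsto (fun x : ℝ => (x ^ α)⁻¹ * Real.exp (α / x))
      (nhdsWithin 1 (Set.Iio 1)) (nhds ((((1:ℝ)) ^ α)⁻¹ * Real.exp (α / 1))) := by
    have c1 : ContinuousAt (fun x : ℝ => x ^ α) 1 :=
      Real.continuousAt_rpow_const 1 α (Or.inl one_ne_zero)
    have c2 : ContinuousAt (fun x : ℝ => (x ^ α)⁻¹) 1 := c1.inv₀ (by simp [Real.one_rpow])
    have c3 : ContinuousAt (fun x : ℝ => Real.exp (α / x)) 1 :=
      (Real.continuous_exp.continuousAt).comp (continuousAt_const.div continuousAt_id one_ne_zero)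
    exact ((c2.mul c3).tendsto).mono_left nhdsWithin_le_nhds
  have hT0 : Tendsto (fun x : ℝ => ((1 - x) / x) ^ α) (nhdsWithin 1 (Set.Iio 1)) (nhds 0) := by
    have hb : Tendsto (fun x : ℝ => (1 - x) / x) (nhdsWithin 1 (Set.Iio 1)) (nhds 0) := by
      have hc : ContinuousAt (fun x : ℝ => (1 - x) / x) 1 :=
        ((continuous_const.sub continuous_id).continuousAt).div continuousAt_id one_ne_zero
      have := hc.tendsto.mono_left (nhdsWithin_le_nhds (s := Set.Iio 1))
      simpa using this
    have h2 : ContinuousAt (fun t : ℝ => t ^ α) 0 :=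
      Real.continuousAt_rpow_const 0 α (Or.inr hα0.le)
    have := h2.tendsto.comp hb
    simpa [Function.comp_def, Real.zero_rpow hα0.ne'] using this
  have hT1 : Tendsto (fun x : ℝ => K₁ * ((1 - x) * f x)) (nhdsWithin 1 (Set.Iio 1)) (nhds 0) := by
    have hf1 : (fun x : ℝ => K₁ * ((1 - x) * f x)) =ᶠ[nhdsWithin 1 (Set.Iio 1)]
        (fun x => K₁ * ((1 - x) * (((1 - x) / x) ^ α * Real.exp (α / x)))) := by
      filter_upwards [hevAx] with x hx
      rw [hf x ⟨lt_trans hA0 hx.1, hx.2⟩]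
    apply Filter.Tendsto.congr' hf1.symm
    have h1x : Tendsto (fun x : ℝ => 1 - x) (nhdsWithin 1 (Set.Iio 1)) (nhds 0) := by
      have hc : Continuous (fun x : ℝ => 1 - x) := continuous_const.sub continuous_id
      have := (hc.tendsto (1:ℝ)).mono_left (nhdsWithin_le_nhds (s := Set.Iio 1))
      simpa using this
    have hexp : Tendsto (fun x : ℝ => Real.exp (α / x)) (nhdsWithin 1 (Set.Iio 1))
        (nhds (Real.exp (α / 1))) :=
      (((Real.continuous_exp.continuousAt).comp
        (continuousAt_const.div continuousAt_id one_ne_zero)).tendsto).mono_left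
        nhdsWithin_le_nhds
    have := (tendsto_const_nhds (x := K₁)).mul (h1x.mul (hT0.mul hexp))
    simpa using this
  have hmain : (fun x => (1 - x) * f₂ x) =ᶠ[nhdsWithin (1:ℝ) (Set.Iio 1)]
      (fun x => K₁ * ((1 - x) * f x)
        + ((1 - x) ^ p * ∫ y in A..x, φ y * (1 - y) ^ (-(p + 1)))
          * ((x ^ α)⁻¹ * Real.exp (α / x))) := by
    filter_upwards [hevAx] with x hx
    have hx0 : 0 < x := lt_trans hA0 hx.1
    have hx1 : x < 1 := hx.2
    have h1x : (0:ℝ) < 1 - x := by linarith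
    have hmem : x ∈ Set.Ioo (0:ℝ) 1 := ⟨hx0, hx1⟩
    have hIcongr : (∫ y in A..x, -2 / ρ ^ 2 * (a * y + b) / (y ^ 2 * (1 - y) ^ 2) * (1 / f y))
        = ∫ y in A..x, φ y * (1 - y) ^ (-(p + 1)) := by
      apply intervalIntegral.integral_congr
      intro y hy
      rw [Set.uIcc_of_le hx.1.le] at hy
      dsimp only
      have hy0 : 0 < y := lt_of_lt_of_le hA0 hy.1
      have hy1 : y < 1 := lt_of_le_of_lt hy.2 hx1
      have h1y : (0:ℝ) < 1 - y := by linarith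
      rw [hf y ⟨hy0, hy1⟩]
      have hdiv : ((1 - y) / y) ^ α = (1 - y) ^ α / y ^ α := Real.div_rpow h1y.le hy0.le α
      have hpow : (1 - y) ^ (-(p + 1)) = ((1 - y) ^ α * (1 - y) ^ (2:ℕ))⁻¹ := by
        rw [Real.rpow_neg h1y.le]
        congr 1
        rw [show p + 1 = α + ((2:ℕ):ℝ) by push_cast; rw [hpdef]; ring,
          Real.rpow_add h1y, Real.rpow_natCast]
      rw [hdiv, hpow, hφdef]
      dsimp only
      have e2 : Real.exp (-(α / y)) = (Real.exp (α / y))⁻¹ := Real.exp_neg _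
      rw [e2]
      have n1 : (1 - y) ^ α ≠ 0 := (Real.rpow_pos_of_pos h1y α).ne'
      have n2 : y ^ α ≠ 0 := (Real.rpow_pos_of_pos hy0 α).ne'
      have e1 : Real.exp (α / y) ≠ 0 := Real.exp_ne_zero _
      have hyne : y ≠ 0 := hy0.ne'
      have h1yne : (1:ℝ) - y ≠ 0 := h1y.ne'
      field_simp
    rw [hf₂ x hmem, hf x hmem, hIcongr]
    have hdivx : ((1 - x) / x) ^ α = (1 - x) ^ α / x ^ α := Real.div_rpow h1x.le hx0.le α
    have hpx : (1 - x) * (1 - x) ^ α = (1 - x) ^ p := by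
      rw [hpdef, Real.rpow_add h1x, Real.rpow_one]; ring
    rw [hdivx]
    have nx : x ^ α ≠ 0 := (Real.rpow_pos_of_pos hx0 α).ne'
    have key2 : (1 - x) * ((1 - x) ^ α / x ^ α * Real.exp (α / x))
        * (∫ y in A..x, φ y * (1 - y) ^ (-(p + 1)))
        = ((1 - x) ^ p * ∫ y in A..x, φ y * (1 - y) ^ (-(p + 1)))
          * ((x ^ α)⁻¹ * Real.exp (α / x)) := by
      rw [← hpx]; field_simp
    linear_combination key2
  have hlim := hT1.add (hkey.mul hT3)
  set C : ℝ := 2 * (a + b) / (ρ ^ 2 * p) with hCdef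
  have hab : (0:ℝ) < a + b := by linarith
  have hC : 0 < C := by positivity
  have hval : (0:ℝ) + φ 1 / p * (((1:ℝ) ^ α)⁻¹ * Real.exp (α / 1)) = -C := by
    simp only [hφdef, Real.one_rpow, one_pow, mul_one, div_one, inv_one, one_mul, zero_add]
    rw [Real.exp_neg, hCdef]
    field_simp [Real.exp_ne_zero]
  rw [hval] at hlim
  have hlim2 : Tendsto (fun x => (1 - x) * f₂ x) (nhdsWithin 1 (Set.Iio 1)) (nhds (-C)) :=
    Filter.Tendsto.congr' hmain.symm hlim
  constructor
  · have h1 : Tendsto (fun x : ℝ => 1 - x) (nhdsWithin 1 (Set.Iio 1))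
        (nhdsWithin 0 (Set.Ioi 0)) := by
      apply tendsto_nhdsWithin_of_tendsto_nhds_of_eventually_within
      · have hc : Continuous (fun x : ℝ => 1 - x) := continuous_const.sub continuous_id
        have := (hc.tendsto (1:ℝ)).mono_left (nhdsWithin_le_nhds (s := Set.Iio 1))
        simpa using this
      · filter_upwards [self_mem_nhdsWithin] with x hx
        simp only [Set.mem_Iio] at hx
        simp only [Set.mem_Ioi]
        linarith
    have hinv : Tendsto (fun x : ℝ => (1 - x)⁻¹) (nhdsWithin 1 (Set.Iio 1)) atTop :=
      tendsto_inv_nhdsGT_zero.comp h1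
    have heq2 : f₂ =ᶠ[nhdsWithin (1:ℝ) (Set.Iio 1)]
        (fun x => ((1 - x) * f₂ x) * (1 - x)⁻¹) := by
      filter_upwards [hevAx] with x hx
      have h1xne : (1:ℝ) - x ≠ 0 := by
        have : x < 1 := hx.2; intro h; rw [sub_eq_zero] at h; linarith
      field_simp
    apply Filter.Tendsto.congr' heq2.symm
    exact Filter.Tendsto.neg_mul_atTop (by linarith : -C < 0) hlim2 hinv
  · exact ⟨C, hC, hlim2⟩
end
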